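/- arXiv:2503.17244 — 4 statements merged into one kernel-verified Lean document; each statement's English description precedes it below -/
import Mathlib

section
/- Along the MM iteration, the cost satisfies the sufficient-decrease inequality f(x_{n+1}) ≤ f(x_n) − (L/2)‖x_{n+1} − x_n‖² for every n. -/
open ContinuousLinearMap

local notation "⟪" x ", " y "⟫" => @inner ℂ _ _ x y

lemma descent_aux {H : Type*} [NormedAddCommGroup H] [InnerProductSpace ℂ H]
    (E : H → ℝ) (E' : H → H) (L : ℝ) (hL : 0 ≤ L)
    (hE : ∀ x : H,
      HasFDerivAt E (Complex.reCLM.comp ((innerSL ℂ (E' x)).restrictScalars ℝ)) x)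
    (hLip : LipschitzWith L.toNNReal E') (v u : H) :
    E u ≤ E v + (⟪E' v, u - v⟫).re + L / 2 * ‖u - v‖ ^ 2 := by
  set d := u - v with hd
  set r := (⟪E' v, d⟫).re with hr
  set c : ℝ → H := fun t => v + t • d with hc
  set h : ℝ → ℝ := fun t => E v + t * r + L / 2 * t ^ 2 * ‖d‖ ^ 2 - E (c t) with hh
  have hcderiv : ∀ t : ℝ, HasDerivAt c d t := by
    intro t
    have := ((hasDerivAt_id t).smul_const d).const_add v
    simpa [hc] using this
  have hEc : ∀ t : ℝ, HasDerivAt (fun s => E (c s)) ((⟪E' (c t), d⟫).re) t := by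
    intro t
    have := (hE (c t)).comp_hasDerivAt t (hcderiv t)
    simp at this; exact this
  have hhderiv : ∀ t : ℝ,
      HasDerivAt h (r + L * t * ‖d‖ ^ 2 - (⟪E' (c t), d⟫).re) t := by
    intro t
    have h1 : HasDerivAt (fun t : ℝ => E v + t * r + L / 2 * t ^ 2 * ‖d‖ ^ 2)
        (r + L * t * ‖d‖ ^ 2) t := by
      have := (((hasDerivAt_id t).mul_const r).const_add (E v)).add
        (((hasDerivAt_pow 2 t).const_mul (L/2)).mul_const (‖d‖^2))
      exact this.congr_deriv (by norm_num only; ring)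
    exact h1.sub (hEc t)
  have hnn : ∀ t ∈ Set.Ioo (0:ℝ) 1, 0 ≤ deriv h t := by
    intro t ht
    rw [(hhderiv t).deriv]
    have hlip2 : ‖E' (c t) - E' v‖ ≤ L * (t * ‖d‖) := by
      have := hLip.dist_le_mul (c t) v
      rw [dist_eq_norm, dist_eq_norm] at this
      have h2 : c t - v = t • d := by simp [hc]
      rw [h2, norm_smul] at this
      calc ‖E' (c t) - E' v‖ ≤ L.toNNReal * (‖t‖ * ‖d‖) := this
        _ = L * (t * ‖d‖) := by
            rw [Real.coe_toNNReal _ hL, Real.norm_eq_abs, abs_of_nonneg ht.1.le]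
    have hinner : (⟪E' (c t), d⟫).re - r ≤ L * t * ‖d‖ ^ 2 := by
      have h3 : (⟪E' (c t), d⟫).re - r = (⟪E' (c t) - E' v, d⟫).re := by
        rw [hr, inner_sub_left]; simp
      rw [h3]
      calc (⟪E' (c t) - E' v, d⟫).re ≤ ‖E' (c t) - E' v‖ * ‖d‖ :=
            re_inner_le_norm (𝕜 := ℂ) _ _
        _ ≤ L * (t * ‖d‖) * ‖d‖ := by
            apply mul_le_mul_of_nonneg_right hlip2 (norm_nonneg _)
        _ = L * t * ‖d‖ ^ 2 := by ring
    linarith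
  have hmono : MonotoneOn h (Set.Icc 0 1) := by
    apply monotoneOn_of_deriv_nonneg (convex_Icc 0 1)
    · exact Continuous.continuousOn (by
        have : Differentiable ℝ h := fun t => (hhderiv t).differentiableAt
        exact this.continuous)
    · intro t _
      exact (hhderiv t).differentiableAt.differentiableWithinAt
    · intro t ht
      rw [interior_Icc] at ht
      exact hnn t ht
  have h01 : h 0 ≤ h 1 := hmono (by norm_num) (by norm_num) (by norm_num)
  have h0 : h 0 = 0 := by simp [hh, hc]
  have h1 : h 1 = E v + r + L / 2 * ‖d‖ ^ 2 - E u := by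
    have : c 1 = u := by simp [hc, hd]
    simp [hh, this]
  rw [h0, h1] at h01
  linarith

/-- Along the MM iteration, the cost satisfies the
sufficient-decrease inequality f(x_{n+1}) ≤ f(x_n) − (L/2)‖x_{n+1} − x_n‖²
for every n. -/
theorem deepen_mm_sufficient_decrease
    {H K : Type*} [NormedAddCommGroup H] [InnerProductSpace ℂ H] [FiniteDimensional ℂ H]
    [NormedAddCommGroup K] [InnerProductSpace ℂ K] [FiniteDimensional ℂ K]
    (A : H →L[ℂ] K) (b : K) (E : H → ℝ) (E' : H → H) (L : ℝ) (hL : 0 < L)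
    (hE : ∀ x : H,
      HasFDerivAt E (Complex.reCLM.comp ((innerSL ℂ (E' x)).restrictScalars ℝ)) x)
    (hLip : LipschitzWith L.toNNReal E')
    (f : H → ℝ) (hf : ∀ x, f x = 1 / 2 * ‖A x - b‖ ^ 2 + E x)
    (x : ℕ → H)
    (hx : ∀ n : ℕ, ((ContinuousLinearMap.adjoint A).comp A
        + (L : ℂ) • ContinuousLinearMap.id ℂ H) (x (n + 1))
      = ContinuousLinearMap.adjoint A b + L • x n - E' (x n)) :
    ∀ n : ℕ, f (x (n + 1)) ≤ f (x n) - L / 2 * ‖x (n + 1) - x n‖ ^ 2 := by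
  intro n
  set v := x n with hv
  set u := x (n + 1) with hu
  set d := u - v with hd
  -- the optimality equation
  have h1 := hx n
  rw [ContinuousLinearMap.add_apply, ContinuousLinearMap.comp_apply,
    ContinuousLinearMap.smul_apply, ContinuousLinearMap.id_apply] at h1
  have hLsmul : (L : ℂ) • u = L • u := by
    rw [Complex.coe_smul]
  have key : ContinuousLinearMap.adjoint A (A u - b) = -(L • d) - E' v := by
    rw [map_sub]
    rw [hLsmul] at h1
    have h2 : ContinuousLinearMap.adjoint A (A u)
        = ContinuousLinearMap.adjoint A b + L • v - E' v - L • u := by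
      rw [← h1]; abel
    rw [h2, hd]
    rw [smul_sub]
    abel
  -- inner product identity
  have hre : (⟪A u - b, A d⟫).re = -(L * ‖d‖ ^ 2) - (⟪E' v, d⟫).re := by
    rw [← ContinuousLinearMap.adjoint_inner_left, key]
    rw [sub_eq_add_neg, inner_add_left, inner_neg_left, inner_neg_left]
    have hsm : ⟪L • d, d⟫ = (L : ℂ) * ⟪d, d⟫ := by
      rw [← Complex.coe_smul, inner_smul_left]
      simp
    have hdd : (⟪d, d⟫ : ℂ).re = ‖d‖ ^ 2 := by
      have := @inner_self_eq_norm_sq ℂ _ _ _ _ d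
      simpa using this
    rw [hsm]
    simp [Complex.mul_re, Complex.add_re, hdd]
    simp only [← Complex.ofReal_pow, Complex.ofReal_re]
    ring
  -- norm expansion
  have hAd : A d = A u - A v := by rw [hd, map_sub]
  have hAvb : A v - b = (A u - b) - A d := by rw [hAd]; abel
  have hnorm : ‖A v - b‖ ^ 2 = ‖A u - b‖ ^ 2 - 2 * (⟪A u - b, A d⟫).re + ‖A d‖ ^ 2 := by
    rw [hAvb]
    have := @norm_sub_sq ℂ _ _ _ _ (A u - b) (A d)
    exact this
  -- descent lemma
  have hdesc := descent_aux E E' L hL.le hE hLip v u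
  rw [← hd] at hdesc
  rw [hf, hf]
  have hAd2 : (0:ℝ) ≤ ‖A d‖ ^ 2 := sq_nonneg _
  linarith
end

section
/- Along the MM iteration the sequence of cost values f(x_n) is nonincreasing, and if in addition E(x) ≥ 0 for all x (so that f is bounded below by 0), then the sequence f(x_n) converges to a finite limit. -/
open ContinuousLinearMap Filter Topology Complex

noncomputable section

variable {H K : Type*} [NormedAddCommGroup H] [InnerProductSpace ℂ H]

/-- Descent lemma for Lipschitz gradient. -/
lemma mm_descent (E : H → ℝ) (E' : H → H) (L : ℝ) (hL : 0 < L)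
    (hE : ∀ x : H,
      HasFDerivAt E (Complex.reCLM.comp ((innerSL ℂ (E' x)).restrictScalars ℝ)) x)
    (hLip : LipschitzWith L.toNNReal E') (x y : H) :
    E y ≤ E x + (inner ℂ (E' x) (y - x) : ℂ).re + L / 2 * ‖y - x‖ ^ 2 := by
  set d : H := y - x with hd
  set r : ℝ := (inner ℂ (E' x) d : ℂ).re with hr
  set s : ℝ := ‖d‖ ^ 2 with hs
  set φ : ℝ → ℝ := fun t => E (x + t • d) - t * r - L / 2 * t ^ 2 * s with hφdef
  have hc : ∀ t : ℝ, HasDerivAt (fun t : ℝ => x + t • d) d t := by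
    intro t
    simpa using (((hasDerivAt_id t).smul_const d).const_add x)
  have hφ : ∀ t : ℝ, HasDerivAt φ
      ((inner ℂ (E' (x + t • d)) d : ℂ).re - r - L * t * s) t := by
    intro t
    have h1 : HasDerivAt (fun t : ℝ => E (x + t • d))
        ((inner ℂ (E' (x + t • d)) d : ℂ).re) t := by
      have := (hE (x + t • d)).comp_hasDerivAt t (hc t)
      exact this
    have h2 : HasDerivAt (fun t : ℝ => t * r) r t := by
      simpa using (hasDerivAt_id t).mul_const r
    have h3 : HasDerivAt (fun t : ℝ => L / 2 * t ^ 2 * s) (L * t * s) t := by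
      have := ((hasDerivAt_pow 2 t).const_mul (L / 2)).mul_const s
      refine this.congr_deriv ?_
      simp only [Nat.cast_ofNat, Nat.reduceSub, pow_one]
      ring
    exact (h1.sub h2).sub h3
  have key : φ 1 ≤ φ 0 := by
    have hanti : AntitoneOn φ (Set.Icc (0:ℝ) 1) := by
      apply antitoneOn_of_deriv_nonpos (convex_Icc 0 1)
      · exact fun t _ => ((hφ t).differentiableAt).continuousAt.continuousWithinAt
      · exact fun t _ => ((hφ t).differentiableAt).differentiableWithinAt
      · intro t ht
        rw [interior_Icc] at ht
        rw [(hφ t).deriv]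
        have hre : (inner ℂ (E' (x + t • d)) d : ℂ).re - r
            = (inner ℂ (E' (x + t • d) - E' x) d : ℂ).re := by
          rw [inner_sub_left]; simp [hr]
        have hcs : (inner ℂ (E' (x + t • d) - E' x) d : ℂ).re
            ≤ ‖E' (x + t • d) - E' x‖ * ‖d‖ := by
          exact re_inner_le_norm (𝕜 := ℂ) (E' (x + t • d) - E' x) d
        have hlip : ‖E' (x + t • d) - E' x‖ ≤ L * (t * ‖d‖) := by
          have := hLip.dist_le_mul (x + t • d) x
          rw [dist_eq_norm, dist_eq_norm] at this
          have h4 : x + t • d - x = t • d := by abel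
          rw [h4, norm_smul] at this
          rw [Real.coe_toNNReal L hL.le] at this
          simpa [abs_of_pos ht.1, mul_assoc] using this
        have hds : 0 ≤ ‖d‖ := norm_nonneg d
        have hfin : (inner ℂ (E' (x + t • d) - E' x) d : ℂ).re ≤ L * t * s := by
          refine hcs.trans ((mul_le_mul_of_nonneg_right hlip hds).trans_eq ?_)
          rw [hs]; ring
        linarith [hre ▸ hfin]
    exact hanti (Set.left_mem_Icc.mpr zero_le_one) (Set.right_mem_Icc.mpr zero_le_one)
      zero_le_one
  have h0 : φ 0 = E x := by simp [hφdef]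
  have h1 : φ 1 = E y - r - L / 2 * s := by
    simp only [hφdef, one_smul, one_pow, one_mul, hd]
    rw [add_sub_cancel]
    ring
  rw [h0, h1] at key
  linarith

end

lemma mm_quad {H K : Type*} [NormedAddCommGroup H] [InnerProductSpace ℂ H]
    [FiniteDimensional ℂ H] [NormedAddCommGroup K] [InnerProductSpace ℂ K]
    [FiniteDimensional ℂ K]
    (A : H →L[ℂ] K) (b : K) (L : ℝ) (hL : 0 < L) (w x z : H)
    (heq : ContinuousLinearMap.adjoint A (A z - b) = L • (x - z) - w) :
    1 / 2 * ‖A z - b‖ ^ 2 + (inner ℂ w (z - x) : ℂ).re + L / 2 * ‖z - x‖ ^ 2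
      ≤ 1 / 2 * ‖A x - b‖ ^ 2 := by
  set h : H := x - z with hh
  have hAx : A x - b = (A z - b) + A h := by
    rw [hh, map_sub]; abel
  have hexp : ‖A x - b‖ ^ 2 = ‖A z - b‖ ^ 2
      + 2 * (inner ℂ (A z - b) (A h) : ℂ).re + ‖A h‖ ^ 2 := by
    rw [hAx]
    exact norm_add_sq (𝕜 := ℂ) (A z - b) (A h)
  have hadj : (inner ℂ (A z - b) (A h) : ℂ).re = L * ‖h‖ ^ 2 - (inner ℂ w h : ℂ).re := by
    have h1 : (inner ℂ (A z - b) (A h) : ℂ) = inner ℂ (ContinuousLinearMap.adjoint A (A z - b)) h :=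
      (ContinuousLinearMap.adjoint_inner_left A h (A z - b)).symm
    rw [h1, heq, inner_sub_left, ← Complex.coe_smul, inner_smul_left]
    have h2 : (inner ℂ h h : ℂ).re = ‖h‖ ^ 2 := by
      simpa using inner_self_eq_norm_sq (𝕜 := ℂ) h
    simp [Complex.sub_re, Complex.mul_re, Complex.conj_ofReal, h2,
      inner_self_im]
    left; rw [← Complex.ofReal_pow, Complex.ofReal_re]
  have hzx : z - x = -h := by rw [hh]; abel
  have hw : (inner ℂ w (z - x) : ℂ).re = -(inner ℂ w h : ℂ).re := by
    rw [hzx, inner_neg_right]; simp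
  have hnzx : ‖z - x‖ = ‖h‖ := by rw [hzx, norm_neg]
  rw [hw, hnzx, hexp, hadj]
  nlinarith [norm_nonneg (A h), sq_nonneg ‖A h‖, sq_nonneg ‖h‖]


/-- Along the MM iteration the sequence of cost values f(x_n) is
nonincreasing, and if in addition E ≥ 0 (so that f is bounded below by 0),
then the sequence f(x_n) converges to a finite limit. -/
theorem deepen_mm_cost_monotone_convergent
    {H K : Type*} [NormedAddCommGroup H] [InnerProductSpace ℂ H] [FiniteDimensional ℂ H]
    [NormedAddCommGroup K] [InnerProductSpace ℂ K] [FiniteDimensional ℂ K]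
    (A : H →L[ℂ] K) (b : K) (E : H → ℝ) (E' : H → H) (L : ℝ) (hL : 0 < L)
    (hE : ∀ x : H,
      HasFDerivAt E (Complex.reCLM.comp ((innerSL ℂ (E' x)).restrictScalars ℝ)) x)
    (hLip : LipschitzWith L.toNNReal E')
    (f : H → ℝ) (hf : ∀ x, f x = 1 / 2 * ‖A x - b‖ ^ 2 + E x)
    (x : ℕ → H)
    (hx : ∀ n : ℕ, ((ContinuousLinearMap.adjoint A).comp A
        + (L : ℂ) • ContinuousLinearMap.id ℂ H) (x (n + 1))
      = ContinuousLinearMap.adjoint A b + L • x n - E' (x n)) :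
    Antitone (fun n : ℕ => f (x n)) ∧
    ((∀ z : H, 0 ≤ E z) →
      ∃ c : ℝ, Tendsto (fun n : ℕ => f (x n)) atTop (𝓝 c)) := by
  have hstep : ∀ n, f (x (n + 1)) ≤ f (x n) := by
    intro n
    set z := x (n + 1) with hz
    set p := x n with hp
    have heq : ContinuousLinearMap.adjoint A (A z - b) = L • (p - z) - E' p := by
      have h0 := hx n
      rw [ContinuousLinearMap.add_apply, ContinuousLinearMap.comp_apply,
        ContinuousLinearMap.smul_apply, ContinuousLinearMap.id_apply] at h0
      have h1 : ContinuousLinearMap.adjoint A (A z)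
          = ContinuousLinearMap.adjoint A b + L • p - E' p - (L : ℂ) • z := by
        rw [← h0]; abel
      rw [map_sub, h1, Complex.coe_smul, smul_sub]
      abel
    have hd := mm_descent E E' L hL hE hLip p z
    have hq := mm_quad A b L hL (E' p) p z heq
    rw [hf, hf]
    linarith
  have hanti : Antitone fun n : ℕ => f (x n) := antitone_nat_of_succ_le hstep
  refine ⟨hanti, fun hEpos => ?_⟩
  have hbdd : ∀ n, 0 ≤ f (x n) := by
    intro n
    rw [hf]
    have := hEpos (x n)
    positivity
  refine ⟨_, tendsto_atTop_ciInf hanti ⟨0, fun y hy => ?_⟩⟩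
  obtain ⟨n, rfl⟩ := hy
  exact hbdd n
end

section
/- If E(x) ≥ 0 for all x, then the MM iterates satisfy Σ_{n=0}^{∞} ‖x_{n+1} − x_n‖² ≤ (2/L) f(x₀); in particular ‖x_{n+1} − x_n‖ → 0 as n → ∞. -/
open ContinuousLinearMap Filter Topology

open intervalIntegral in
lemma descent_lemma {H : Type*} [NormedAddCommGroup H] [InnerProductSpace ℂ H]
    (E : H → ℝ) (E' : H → H) (L : ℝ) (hL : 0 ≤ L)
    (hE : ∀ x : H,
      HasFDerivAt E (Complex.reCLM.comp ((innerSL ℂ (E' x)).restrictScalars ℝ)) x)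
    (hLip : LipschitzWith L.toNNReal E') (u v : H) :
    E v ≤ E u + (inner ℂ (E' u) (v - u) : ℂ).re + L / 2 * ‖v - u‖ ^ 2 := by
  set d := v - u with hd
  set φ : ℝ → ℝ := fun t => (inner ℂ (E' (u + t • d)) d : ℂ).re with hφ
  have hcont : Continuous φ := by
    apply Complex.continuous_re.comp
    exact Continuous.inner (hLip.continuous.comp (by continuity)) continuous_const
  have hderiv : ∀ t : ℝ, HasDerivAt (fun t : ℝ => E (u + t • d)) (φ t) t := by
    intro t
    have hline : HasDerivAt (fun t : ℝ => u + t • d) d t := by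
      simpa using ((hasDerivAt_id t).smul_const d).const_add u
    have := (hE (u + t • d)).comp_hasDerivAt t hline
    exact this
  have hFTC : ∫ t in (0:ℝ)..1, φ t = E v - E u := by
    have := integral_eq_sub_of_hasDerivAt (f := fun t : ℝ => E (u + t • d))
      (f' := φ) (a := 0) (b := 1) (fun t _ => hderiv t)
      (hcont.intervalIntegrable 0 1)
    simpa [hd] using this
  have hbound : ∀ t ∈ Set.Icc (0:ℝ) 1, φ t ≤ φ 0 + (L * ‖d‖ ^ 2) * t := by
    intro t ht
    have h1 : φ t - φ 0 = (inner ℂ (E' (u + t • d) - E' u) d : ℂ).re := by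
      simp [φ, inner_sub_left]
    have h2 : (inner ℂ (E' (u + t • d) - E' u) d : ℂ).re ≤ ‖E' (u + t • d) - E' u‖ * ‖d‖ :=
      by exact re_inner_le_norm (𝕜 := ℂ) (E' (u + t • d) - E' u) d
    have h3 : ‖E' (u + t • d) - E' u‖ ≤ L * (t * ‖d‖) := by
      calc ‖E' (u + t • d) - E' u‖ ≤ L.toNNReal * ‖t • d‖ := by
            have h := hLip.dist_le_mul (u + t • d) u
            rwa [dist_eq_norm, dist_eq_norm, add_sub_cancel_left] at h
        _ = L * (t * ‖d‖) := by
            rw [norm_smul, Real.norm_eq_abs, abs_of_nonneg ht.1,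
              Real.coe_toNNReal L hL]
    nlinarith [norm_nonneg d, ht.1]
  have hint : ∫ t in (0:ℝ)..1, (φ 0 + (L * ‖d‖ ^ 2) * t) =
      φ 0 + L / 2 * ‖d‖ ^ 2 := by
    rw [intervalIntegral.integral_add (intervalIntegrable_const)
      ((by continuity : Continuous fun t : ℝ => L * ‖d‖ ^ 2 * t).intervalIntegrable 0 1),
      intervalIntegral.integral_const, intervalIntegral.integral_const_mul,
      integral_id]
    norm_num
    ring
  have hmono : ∫ t in (0:ℝ)..1, φ t ≤ ∫ t in (0:ℝ)..1, (φ 0 + (L * ‖d‖ ^ 2) * t) := by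
    apply intervalIntegral.integral_mono_on (by norm_num)
      (hcont.intervalIntegrable 0 1)
      ((continuous_const.add (by continuity : Continuous fun t : ℝ => L * ‖d‖ ^ 2 * t)).intervalIntegrable 0 1)
      hbound
  have : E v - E u ≤ φ 0 + L / 2 * ‖d‖ ^ 2 := by rw [← hFTC, ← hint] at *; exact hmono
  have hφ0 : φ 0 = (inner ℂ (E' u) d : ℂ).re := by simp [φ]
  linarith [this, hφ0.le, hφ0.ge]

/-- If E ≥ 0, then the MM iterates satisfy
Σ_{n=0}^{∞} ‖x_{n+1} − x_n‖² ≤ (2/L) f(x₀); in particular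
‖x_{n+1} − x_n‖ → 0 as n → ∞. -/
theorem deepen_mm_square_summable_increments
    {H K : Type*} [NormedAddCommGroup H] [InnerProductSpace ℂ H] [FiniteDimensional ℂ H]
    [NormedAddCommGroup K] [InnerProductSpace ℂ K] [FiniteDimensional ℂ K]
    (A : H →L[ℂ] K) (b : K) (E : H → ℝ) (E' : H → H) (L : ℝ) (hL : 0 < L)
    (hE : ∀ x : H,
      HasFDerivAt E (Complex.reCLM.comp ((innerSL ℂ (E' x)).restrictScalars ℝ)) x)
    (hLip : LipschitzWith L.toNNReal E')
    (hE0 : ∀ z : H, 0 ≤ E z)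
    (f : H → ℝ) (hf : ∀ x, f x = 1 / 2 * ‖A x - b‖ ^ 2 + E x)
    (x : ℕ → H)
    (hx : ∀ n : ℕ, ((ContinuousLinearMap.adjoint A).comp A
        + (L : ℂ) • ContinuousLinearMap.id ℂ H) (x (n + 1))
      = ContinuousLinearMap.adjoint A b + L • x n - E' (x n)) :
    Summable (fun n : ℕ => ‖x (n + 1) - x n‖ ^ 2) ∧
    (∑' n : ℕ, ‖x (n + 1) - x n‖ ^ 2) ≤ 2 / L * f (x 0) ∧
    Tendsto (fun n : ℕ => ‖x (n + 1) - x n‖) atTop (𝓝 0) := by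
  have key : ∀ n : ℕ, L / 2 * ‖x (n + 1) - x n‖ ^ 2 ≤ f (x n) - f (x (n + 1)) := by
    intro n
    set u := x n with hu
    set v := x (n + 1) with hv
    set d := v - u with hd
    have hxn := hx n
    simp only [ContinuousLinearMap.add_apply, ContinuousLinearMap.comp_apply,
      ContinuousLinearMap.smul_apply, ContinuousLinearMap.id_apply, ← hu, ← hv] at hxn
    have hAd : ContinuousLinearMap.adjoint A (A v - b) = -(L • d) - E' u := by
      rw [Complex.coe_smul] at hxn
      have h2 : ContinuousLinearMap.adjoint A (A v)
          = ContinuousLinearMap.adjoint A b + L • u - E' u - L • v := by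
        rw [← hxn]; abel
      rw [map_sub, h2, hd, smul_sub]; abel
    have hre : (inner ℂ (A v - b) (A d) : ℂ).re
        = -(L * ‖d‖ ^ 2) - (inner ℂ (E' u) d : ℂ).re := by
      rw [← ContinuousLinearMap.adjoint_inner_left, hAd, ← Complex.coe_smul]
      rw [inner_sub_left, inner_neg_left, inner_smul_left]
      have hdd : (inner ℂ d d : ℂ) = (‖d‖ : ℂ) ^ 2 := inner_self_eq_norm_sq_to_K d
      rw [hdd]
      simp [← Complex.ofReal_pow, Complex.mul_re]
    have hq : ‖A u - b‖ ^ 2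
        = ‖A v - b‖ ^ 2 - 2 * (inner ℂ (A v - b) (A d) : ℂ).re + ‖A d‖ ^ 2 := by
      have h3 : A u - b = (A v - b) - A d := by
        rw [hd, map_sub]; abel
      rw [h3]
      exact norm_sub_sq (𝕜 := ℂ) (A v - b) (A d)
    have hdes := descent_lemma E E' L hL.le hE hLip u v
    rw [← hd] at hdes
    rw [hf u, hf v]
    nlinarith [sq_nonneg ‖A d‖]
  have hf0 : ∀ z, 0 ≤ f z := by
    intro z
    rw [hf]
    have := hE0 z
    positivity
  have hsum : ∀ N : ℕ, ∑ n ∈ Finset.range N, ‖x (n + 1) - x n‖ ^ 2 ≤ 2 / L * f (x 0) := by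
    intro N
    have htel : ∑ n ∈ Finset.range N, (f (x n) - f (x (n + 1))) = f (x 0) - f (x N) :=
      Finset.sum_range_sub' (fun n => f (x n)) N
    have h1 : L / 2 * ∑ n ∈ Finset.range N, ‖x (n + 1) - x n‖ ^ 2 ≤ f (x 0) - f (x N) := by
      rw [Finset.mul_sum, ← htel]
      exact Finset.sum_le_sum fun n _ => key n
    have h2 := hf0 (x N)
    rw [div_mul_eq_mul_div, le_div_iff₀ hL]
    nlinarith
  have hSummable : Summable (fun n : ℕ => ‖x (n + 1) - x n‖ ^ 2) :=
    summable_of_sum_range_le (fun n => by positivity) hsum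
  refine ⟨hSummable, Summable.tsum_le_of_sum_range_le hSummable hsum, ?_⟩
  have h0 := hSummable.tendsto_atTop_zero
  have := (Real.continuous_sqrt.continuousAt (x := (0:ℝ))).tendsto.comp h0
  simpa [Function.comp_def, Real.sqrt_sq (norm_nonneg _)] using this
end

section
/- The gradient of the cost at the MM iterates satisfies ‖∇f(x_{n+1})‖ ≤ 2L ‖x_{n+1} − x_n‖ for every n; consequently, if E ≥ 0 (so f is bounded below), then ∇f(x_n) → 0 as n → ∞. -/
open ContinuousLinearMap Filter Topology

lemma mm_aux_inner_self {K : Type*} [NormedAddCommGroup K] [InnerProductSpace ℂ K] (u : K) :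
    (inner ℂ u u : ℂ).re = ‖u‖ ^ 2 := by
  have := @inner_self_eq_norm_sq ℂ K _ _ _ u
  simpa using this

lemma mm_aux_inner_real_smul {K : Type*} [NormedAddCommGroup K] [InnerProductSpace ℂ K]
    (r : ℝ) (u v : K) : (inner ℂ (r • u) v : ℂ).re = r * (inner ℂ u v : ℂ).re := by
  rw [← Complex.coe_smul, inner_smul_left]
  simp

lemma mm_norm_add_sq {K : Type*} [NormedAddCommGroup K] [InnerProductSpace ℂ K] (u v : K) :
    ‖u + v‖ ^ 2 = ‖u‖ ^ 2 + 2 * (inner ℂ u v : ℂ).re + ‖v‖ ^ 2 := by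
  have := @norm_add_sq ℂ K _ _ _ u v
  simpa using this

lemma mm_e1 {H K : Type*} [NormedAddCommGroup H] [InnerProductSpace ℂ H]
    [FiniteDimensional ℂ H] [NormedAddCommGroup K] [InnerProductSpace ℂ K]
    [FiniteDimensional ℂ K] (A : H →L[ℂ] K) (L : ℝ) (v d : H) (u : K)
    (h : ContinuousLinearMap.adjoint A u
      = (-L) • d - v - ContinuousLinearMap.adjoint A (A d)) :
    (inner ℂ u (A d) : ℂ).re = -L * ‖d‖ ^ 2 - (inner ℂ v d : ℂ).re - ‖A d‖ ^ 2 := by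
  rw [← ContinuousLinearMap.adjoint_inner_left, h]
  simp only [inner_sub_left, Complex.sub_re, ContinuousLinearMap.adjoint_inner_left,
    mm_aux_inner_real_smul, mm_aux_inner_self]

lemma mm_descentE {H : Type*} [NormedAddCommGroup H] [InnerProductSpace ℂ H]
    (E : H → ℝ) (E' : H → H) (L : ℝ) (hL : 0 < L)
    (hE : ∀ x : H,
      HasFDerivAt E (Complex.reCLM.comp ((innerSL ℂ (E' x)).restrictScalars ℝ)) x)
    (hLip : LipschitzWith L.toNNReal E') (p d : H) :
    E (p + d) ≤ E p + (inner ℂ (E' p) d : ℂ).re + L / 2 * ‖d‖ ^ 2 := by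
  set g : ℝ → ℝ := fun t =>
    E p + t * (inner ℂ (E' p) d : ℂ).re + L / 2 * t ^ 2 * ‖d‖ ^ 2 - E (p + t • d) with hg
  have hcurve : ∀ t : ℝ, HasDerivAt (fun t : ℝ => p + t • d) d t := by
    intro t
    simpa using ((hasDerivAt_id t).smul_const d).const_add p
  have hEc : ∀ t : ℝ, HasDerivAt (fun t : ℝ => E (p + t • d))
      ((inner ℂ (E' (p + t • d)) d : ℂ).re) t := by
    intro t
    have := (hE (p + t • d)).comp_hasDerivAt t (hcurve t)
    exact this
  have hgd : ∀ t : ℝ, HasDerivAt g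
      ((inner ℂ (E' p) d : ℂ).re + L * t * ‖d‖ ^ 2 - (inner ℂ (E' (p + t • d)) d : ℂ).re) t := by
    intro t
    have h1 : HasDerivAt (fun t : ℝ => E p + t * (inner ℂ (E' p) d : ℂ).re
        + L / 2 * t ^ 2 * ‖d‖ ^ 2)
        ((inner ℂ (E' p) d : ℂ).re + L * t * ‖d‖ ^ 2) t := by
      have := (((hasDerivAt_id t).mul_const ((inner ℂ (E' p) d : ℂ).re)).const_add (E p)).add
        (((hasDerivAt_pow 2 t).const_mul (L / 2)).mul_const (‖d‖ ^ 2))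
      exact this.congr_deriv (by simp only [one_mul, Nat.cast_ofNat, Nat.reduceSub, pow_one]; ring)
    exact h1.sub (hEc t)
  have hLcoe : (L.toNNReal : ℝ) = L := Real.coe_toNNReal L hL.le
  have hderiv_nonneg : ∀ t ∈ Set.Icc (0:ℝ) 1, 0 ≤
      ((inner ℂ (E' p) d : ℂ).re + L * t * ‖d‖ ^ 2 - (inner ℂ (E' (p + t • d)) d : ℂ).re) := by
    intro t ht
    have hdiff : (inner ℂ (E' (p + t • d)) d : ℂ).re - (inner ℂ (E' p) d : ℂ).re
        = (inner ℂ (E' (p + t • d) - E' p) d : ℂ).re := by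
      rw [inner_sub_left]; simp
    have hb : (inner ℂ (E' (p + t • d) - E' p) d : ℂ).re ≤ ‖E' (p + t • d) - E' p‖ * ‖d‖ :=
      re_inner_le_norm (𝕜 := ℂ) _ _
    have hlip : ‖E' (p + t • d) - E' p‖ ≤ L * (t * ‖d‖) := by
      have := hLip.dist_le_mul (p + t • d) p
      rw [dist_eq_norm, dist_eq_norm, hLcoe] at this
      simpa [norm_smul, abs_of_nonneg ht.1, mul_assoc] using this
    nlinarith [norm_nonneg d, mul_le_mul_of_nonneg_right hlip (norm_nonneg d)]
  have hmono : MonotoneOn g (Set.Icc (0:ℝ) 1) := by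
    apply monotoneOn_of_deriv_nonneg (convex_Icc 0 1)
    · exact fun t _ => ((hgd t).continuousAt).continuousWithinAt
    · exact fun t _ => ((hgd t).differentiableAt).differentiableWithinAt
    · intro t ht
      rw [interior_Icc] at ht
      rw [(hgd t).deriv]
      exact hderiv_nonneg t ⟨ht.1.le, ht.2.le⟩
  have h01 := hmono (Set.mem_Icc.2 ⟨le_refl 0, zero_le_one⟩)
    (Set.mem_Icc.2 ⟨zero_le_one, le_refl 1⟩) zero_le_one
  simp only [hg, zero_smul, add_zero, zero_pow, mul_zero, zero_mul, one_smul, one_pow,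
    mul_one, one_mul] at h01
  linarith

/-- The gradient of the cost at the MM iterates satisfies
‖∇f(x_{n+1})‖ ≤ 2L‖x_{n+1} − x_n‖ for every n; consequently, if E ≥ 0
(so f is bounded below), then ∇f(x_n) → 0 as n → ∞. Here
∇f(x) = Aᴴ(Ax − b) + ∇E(x). -/
theorem deepen_mm_gradient_vanishes
    {H K : Type*} [NormedAddCommGroup H] [InnerProductSpace ℂ H] [FiniteDimensional ℂ H]
    [NormedAddCommGroup K] [InnerProductSpace ℂ K] [FiniteDimensional ℂ K]
    (A : H →L[ℂ] K) (b : K) (E : H → ℝ) (E' : H → H) (L : ℝ) (hL : 0 < L)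
    (hE : ∀ x : H,
      HasFDerivAt E (Complex.reCLM.comp ((innerSL ℂ (E' x)).restrictScalars ℝ)) x)
    (hLip : LipschitzWith L.toNNReal E')
    (x : ℕ → H)
    (hx : ∀ n : ℕ, ((ContinuousLinearMap.adjoint A).comp A
        + (L : ℂ) • ContinuousLinearMap.id ℂ H) (x (n + 1))
      = ContinuousLinearMap.adjoint A b + L • x n - E' (x n)) :
    (∀ n : ℕ,
      ‖ContinuousLinearMap.adjoint A (A (x (n + 1)) - b) + E' (x (n + 1))‖
        ≤ 2 * L * ‖x (n + 1) - x n‖) ∧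
    ((∀ z : H, 0 ≤ E z) →
      Tendsto (fun n : ℕ => ContinuousLinearMap.adjoint A (A (x n) - b) + E' (x n))
        atTop (𝓝 0)) := by
  have hLcoe : (L.toNNReal : ℝ) = L := Real.coe_toNNReal L hL.le
  have hx' : ∀ n : ℕ, ContinuousLinearMap.adjoint A (A (x (n+1))) + L • x (n+1)
      = ContinuousLinearMap.adjoint A b + L • x n - E' (x n) := by
    intro n
    have h := hx n
    simpa [ContinuousLinearMap.add_apply, ContinuousLinearMap.comp_apply,
      ContinuousLinearMap.smul_apply, ContinuousLinearMap.id_apply,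
      Complex.coe_smul] using h
  have hAtop : ∀ n : ℕ, (ContinuousLinearMap.adjoint A) (A (x (n+1)))
      = ContinuousLinearMap.adjoint A b + L • x n - E' (x n) - L • x (n+1) := by
    intro n
    rw [← hx' n]; abel
  have hkey : ∀ n : ℕ, ContinuousLinearMap.adjoint A (A (x (n+1)) - b) + E' (x (n+1))
      = (-L) • (x (n+1) - x n) + (E' (x (n+1)) - E' (x n)) := by
    intro n
    rw [map_sub, hAtop n]
    module
  have part1 : ∀ n : ℕ,
      ‖ContinuousLinearMap.adjoint A (A (x (n + 1)) - b) + E' (x (n + 1))‖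
        ≤ 2 * L * ‖x (n + 1) - x n‖ := by
    intro n
    rw [hkey n]
    have h1 : ‖(-L) • (x (n+1) - x n)‖ = L * ‖x (n+1) - x n‖ := by
      rw [norm_smul]
      simp [abs_of_pos hL]
    have h2 : ‖E' (x (n+1)) - E' (x n)‖ ≤ L * ‖x (n+1) - x n‖ := by
      have := hLip.dist_le_mul (x (n+1)) (x n)
      rwa [dist_eq_norm, dist_eq_norm, hLcoe] at this
    calc ‖(-L) • (x (n+1) - x n) + (E' (x (n+1)) - E' (x n))‖
        ≤ ‖(-L) • (x (n+1) - x n)‖ + ‖E' (x (n+1)) - E' (x n)‖ := norm_add_le _ _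
      _ ≤ L * ‖x (n+1) - x n‖ + L * ‖x (n+1) - x n‖ := by rw [h1]; linarith
      _ = 2 * L * ‖x (n+1) - x n‖ := by ring
  refine ⟨part1, fun hE0 => ?_⟩
  obtain ⟨F, hF⟩ : ∃ F : ℕ → ℝ, ∀ n, F n = 1 / 2 * ‖A (x n) - b‖ ^ 2 + E (x n) :=
    ⟨_, fun n => rfl⟩
  have hdescent : ∀ n : ℕ, F (n + 1) + L / 2 * ‖x (n+1) - x n‖ ^ 2 ≤ F n := by
    intro n
    have hAd : ContinuousLinearMap.adjoint A (A (x n) - b)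
        = (-L) • (x (n+1) - x n) - E' (x n)
          - ContinuousLinearMap.adjoint A (A (x (n+1) - x n)) := by
      rw [map_sub, map_sub, map_sub, hAtop n]
      module
    have e1 : (inner ℂ (A (x n) - b) (A (x (n+1) - x n)) : ℂ).re
        = -L * ‖x (n+1) - x n‖ ^ 2 - (inner ℂ (E' (x n)) (x (n+1) - x n) : ℂ).re
          - ‖A (x (n+1) - x n)‖ ^ 2 :=
      mm_e1 A L (E' (x n)) (x (n+1) - x n) (A (x n) - b) hAd
    have e2 : ‖A (x (n+1)) - b‖ ^ 2
        = ‖A (x n) - b‖ ^ 2 + 2 * (inner ℂ (A (x n) - b) (A (x (n+1) - x n)) : ℂ).re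
          + ‖A (x (n+1) - x n)‖ ^ 2 := by
      have h : A (x (n+1)) - b = (A (x n) - b) + A (x (n+1) - x n) := by
        rw [map_sub]; abel
      rw [h, mm_norm_add_sq]
    have e3 : E (x (n+1)) ≤ E (x n) + (inner ℂ (E' (x n)) (x (n+1) - x n) : ℂ).re
        + L / 2 * ‖x (n+1) - x n‖ ^ 2 := by
      have h := mm_descentE E E' L hL hE hLip (x n) (x (n+1) - x n)
      have h2 : x n + (x (n+1) - x n) = x (n+1) := by abel
      rwa [h2] at h
    have hAdnn : (0:ℝ) ≤ ‖A (x (n+1) - x n)‖ ^ 2 := sq_nonneg _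
    rw [hF, hF, e2]
    nlinarith [e3, e1]
  have hFnonneg : ∀ n : ℕ, 0 ≤ F n := by
    intro n
    have := hE0 (x n)
    have := sq_nonneg ‖A (x n) - b‖
    rw [hF]
    linarith
  have hFanti : Antitone F := by
    apply antitone_nat_of_succ_le
    intro n
    have h1 := hdescent n
    have h2 : (0:ℝ) ≤ L / 2 * ‖x (n+1) - x n‖ ^ 2 := by positivity
    linarith
  have hFbdd : BddBelow (Set.range F) := ⟨0, by rintro _ ⟨n, rfl⟩; exact hFnonneg n⟩
  have hFlim : Tendsto F atTop (𝓝 (⨅ n, F n)) := tendsto_atTop_ciInf hFanti hFbdd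
  have hFlim' : Tendsto (fun n => F (n + 1)) atTop (𝓝 (⨅ n, F n)) :=
    (tendsto_add_atTop_iff_nat 1).2 hFlim
  have hgap : Tendsto (fun n => F n - F (n + 1)) atTop (𝓝 0) := by
    have := hFlim.sub hFlim'
    simpa using this
  have hsq : Tendsto (fun n => ‖x (n+1) - x n‖ ^ 2) atTop (𝓝 0) := by
    have hsq' : Tendsto (fun n => L / 2 * ‖x (n+1) - x n‖ ^ 2) atTop (𝓝 0) := by
      apply squeeze_zero (fun n => by positivity) (fun n => by linarith [hdescent n]) hgap
    have := hsq'.const_mul (2 / L)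
    simp only [mul_zero] at this
    convert this using 2 with n
    field_simp
  have hnorm : Tendsto (fun n => ‖x (n+1) - x n‖) atTop (𝓝 0) := by
    have := (Real.continuous_sqrt.tendsto 0).comp hsq
    simp only [Real.sqrt_zero] at this
    convert this using 2 with n
    simp [Function.comp, Real.sqrt_sq (norm_nonneg _)]
  have hG1 : Tendsto (fun n : ℕ =>
      ContinuousLinearMap.adjoint A (A (x (n + 1)) - b) + E' (x (n + 1))) atTop (𝓝 0) := by
    apply squeeze_zero_norm part1
    have := hnorm.const_mul (2 * L)
    simpa using this
  exact (tendsto_add_atTop_iff_nat 1).1 hG1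
end
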